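/- arXiv:math/0308161 — 4 statements merged into one kernel-verified Lean document; each statement's English description precedes it below -/
import Mathlib

section
/- Let P and Q be orthogonal projections on a complex Hilbert space H, and let H₁ be the orthogonal complement of (ran P ∩ ker Q) ⊕ (ker P ∩ ran Q). Then there exists a bounded operator U on H which is a self-adjoint unitary (U = U* and U² = 1), which lies in the double centralizer of {P, Q, 1} inside the ring of bounded operators on H, such that U x = x for every x in the orthogonal complement of H₁, U maps H₁ into H₁, and U((P − Q)(U x)) = (Q − P) x for every x ∈ H₁. -/
/-!
Put `S = 1 - P - Q` and `D = P - Q`. A vector is killed by `S` iff `x = P x + Q x`, which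
forces `Q P x = P Q x = 0`; hence `ker S = (ran P ∩ ker Q) ⊕ (ker P ∩ ran Q)` and
`H₁ = (ker S)ᗮ` is the closure of the range of `S`. Moreover `D S = -S D`, so `D` commutes
with `S²` and therefore with `|S|`.

Let `U` be the sign of `S` with the convention `sign 0 = 1`, i.e. `U = 2E - 1` where `E` projects
onto `ker S⁻`. It is a self-adjoint unitary in the bicommutant of `S` (hence of `{P, Q, 1}`),
it fixes `ker S`, and `U S = |S|`. Then `(D U + U D) S = D |S| - |S| D = 0`, so `D U = -U D` on
the closure of the range of `S`, which is `H₁`; there `U D U = -D`.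
-/

open ContinuousLinearMap
open Module.End (invtSubmodule mem_invtSubmodule_iff_forall_mem_of_mem)

theorem LinearMap.ker_one_sub_sub_of_isIdempotentElem {R M : Type*} [Ring R] [AddCommGroup M]
    [Module R M] {P Q : M →ₗ[R] M} (hP : IsIdempotentElem P) (hQ : IsIdempotentElem Q) :
    (1 - P - Q).ker = P.range ⊓ Q.ker ⊔ P.ker ⊓ Q.range := by
  apply le_antisymm
  · intro x hx
    have hsum : P x + Q x = x := by
      rw [LinearMap.mem_ker, LinearMap.sub_apply, LinearMap.sub_apply, Module.End.one_apply,
        sub_sub, sub_eq_zero] at hx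
      exact hx.symm
    have hPQ : P (Q x) = 0 := by
      simpa [← Module.End.mul_apply, hP.eq] using congrArg P hsum
    have hQP : Q (P x) = 0 := by
      simpa [← Module.End.mul_apply, hQ.eq] using congrArg Q hsum
    exact Submodule.mem_sup.mpr ⟨P x, ⟨⟨x, rfl⟩, hQP⟩, Q x, ⟨hPQ, ⟨x, rfl⟩⟩, hsum⟩
  · refine sup_le ?_ ?_
    · rintro x ⟨hPx, hQx⟩
      simp [LinearMap.mem_ker.mp hQx, (LinearMap.IsIdempotentElem.mem_range_iff hP).mp hPx]
    · rintro x ⟨hPx, hQx⟩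
      simp [LinearMap.mem_ker.mp hPx, (LinearMap.IsIdempotentElem.mem_range_iff hQ).mp hQx]

theorem Module.End.ker_mem_invtSubmodule_of_commute {R M : Type*} [Semiring R] [AddCommMonoid M]
    [Module R M] {f g : Module.End R M} (h : Commute f g) : f.ker ∈ g.invtSubmodule := by
  rw [mem_invtSubmodule_iff_forall_mem_of_mem]
  intro x hx
  rw [LinearMap.mem_ker, ← Module.End.mul_apply, h.eq, Module.End.mul_apply,
    LinearMap.mem_ker.mp hx, map_zero]

theorem commute_cfcAbs_of_mul_eq_neg_mul {A : Type*} [CStarAlgebra A] [PartialOrder A]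
    [StarOrderedRing A] {a b : A} (hb : IsSelfAdjoint b) (hab : a * b = -(b * a)) :
    Commute a (CFC.abs b) := by
  have hsq : Commute (star b * b) a := by
    rw [hb.star_eq, commute_iff_eq]
    calc b * b * a = -(b * (a * b)) := by rw [mul_assoc, ← neg_eq_iff_eq_neg.mpr hab, mul_neg]
      _ = a * (b * b) := by rw [← mul_assoc, ← neg_mul, ← hab, mul_assoc]
  exact (hsq.cfcₙ_nnreal NNReal.sqrt).symm

section InnerProductSpace

variable {𝕜 E : Type*} [RCLike 𝕜] [NormedAddCommGroup E] [InnerProductSpace 𝕜 E] [CompleteSpace E]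

theorem Submodule.commute_starProjection {K : Submodule 𝕜 E} [K.HasOrthogonalProjection]
    {W : E →L[𝕜] E} (hW : K ∈ invtSubmodule (W : E →ₗ[𝕜] E))
    (hW' : K ∈ invtSubmodule (adjoint W : E →ₗ[𝕜] E)) : Commute K.starProjection W := by
  rw [K.isIdempotentElem_starProjection.commute_iff, K.range_starProjection, K.ker_starProjection]
  exact ⟨hW, orthogonal_mem_invtSubmodule hW'⟩

theorem IsSelfAdjoint.orthogonal_ker_le_ker_of_mul_eq_zero {S T : E →L[𝕜] E}
    (hT : IsSelfAdjoint T) (h : S * T = 0) : T.kerᗮ ≤ S.ker := by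
  rw [T.orthogonal_ker, hT.adjoint_eq]
  refine Submodule.topologicalClosure_minimal _ ?_ S.isClosed_ker
  rintro _ ⟨y, rfl⟩
  show S (T y) = 0
  rw [← mul_apply_eq_comp, h, zero_apply]

end InnerProductSpace

section Sign

variable {H : Type*} [NormedAddCommGroup H] [InnerProductSpace ℂ H] [CompleteSpace H]

/-- The sign of `B`, with the convention `sign 0 = 1`. -/
noncomputable def signOp (B : H →L[ℂ] H) : H →L[ℂ] H := 2 * (B⁻).ker.starProjection - 1

theorem isSelfAdjoint_signOp (B : H →L[ℂ] H) : IsSelfAdjoint (signOp B) := by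
  simpa [signOp, IsSelfAdjoint, (isSelfAdjoint_starProjection _).star_eq] using
    (Commute.ofNat_left 2 _).eq.symm

theorem signOp_mul_self (B : H →L[ℂ] H) : signOp B * signOp B = 1 := by
  have hE : IsStarProjection (B⁻).ker.starProjection := isStarProjection_starProjection
  calc signOp B * signOp B = star (signOp B) * signOp B := by
        rw [(isSelfAdjoint_signOp B).star_eq]
    _ = 1 := Unitary.star_mul_self_of_mem hE.two_mul_sub_one_mem_unitary

theorem IsSelfAdjoint.ker_le_ker_negPart {B : H →L[ℂ] H} (hB : IsSelfAdjoint B) :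
    B.ker ≤ (B⁻).ker := by
  have hsq : B⁻ * B = -(adjoint (B⁻) * B⁻) :=
    calc B⁻ * B = B⁻ * (B⁺ - B⁻) := by rw [CFC.posPart_sub_negPart B]
      _ = -(adjoint (B⁻) * B⁻) := by
        rw [(CFC.negPart_nonneg B).isSelfAdjoint.adjoint_eq, mul_sub, CFC.negPart_mul_posPart,
          zero_sub]
  intro x hx
  rw [← ker_adjoint_comp_self, LinearMap.mem_ker]
  have : (B⁻ * B) x = 0 := by
    rw [mul_apply_eq_comp, show B x = 0 from LinearMap.mem_ker.mp hx, map_zero]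
  simpa [hsq] using this

theorem signOp_apply_of_mem_ker {B : H →L[ℂ] H} (hB : IsSelfAdjoint B) {x : H}
    (hx : x ∈ B.ker) : signOp B x = x := by
  rw [signOp, sub_apply, mul_apply_eq_comp, Submodule.starProjection_eq_self_iff.mpr
    (hB.ker_le_ker_negPart hx), ofNat_apply, two_smul, one_apply_eq_self, add_sub_cancel_right]

theorem signOp_mul_eq_abs {B : H →L[ℂ] H} (hB : IsSelfAdjoint B) : signOp B * B = CFC.abs B := by
  set E := (B⁻).ker.starProjection
  have hE : IsSelfAdjoint E := isSelfAdjoint_starProjection _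
  have hE_pos : E * B⁺ = B⁺ := by
    ext x
    exact Submodule.starProjection_eq_self_iff.mpr (by
      show B⁻ (B⁺ x) = 0
      rw [← mul_apply_eq_comp, CFC.negPart_mul_posPart, zero_apply])
  have hE_neg : E * B⁻ = 0 := by
    have : B⁻ * E = 0 := by
      ext x
      exact LinearMap.mem_ker.mp ((B⁻).ker.starProjection_apply_mem x)
    simpa [hE.star_eq, (CFC.negPart_nonneg B).isSelfAdjoint.star_eq]
      using congrArg star this
  have habs : CFC.abs B = 2 * B⁺ - B := by
    rw [eq_sub_iff_add_eq, CFC.abs_add_self B, two_smul, two_mul]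
  calc signOp B * B = 2 * (E * (B⁺ - B⁻)) - B := by
        rw [CFC.posPart_sub_negPart B, signOp, sub_mul, one_mul, mul_assoc]
    _ = CFC.abs B := by rw [mul_sub, hE_pos, hE_neg, sub_zero, habs]

theorem commute_signOp {B W : H →L[ℂ] H} (hB : IsSelfAdjoint B) (hW : Commute B W) :
    Commute (signOp B) W := by
  have hW' : Commute B (adjoint W) := by
    rw [← star_eq_adjoint]
    simpa [hB.star_eq] using hW.star_star
  have hneg : ∀ V : H →L[ℂ] H, Commute B V → (B⁻).ker ∈ invtSubmodule (V : H →ₗ[ℂ] H) :=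
    fun V hV ↦ Module.End.ker_mem_invtSubmodule_of_commute
      (((hV.cfcₙ_real (·⁻ : ℝ → ℝ)).map toLinearMapRingHom : Commute _ _))
  have hE := Submodule.commute_starProjection (hneg W hW) (hneg _ hW')
  simp only [signOp]
  exact ((Commute.ofNat_left 2 W).mul_left hE).sub_left (Commute.one_left W)

theorem signOp_apply_mem_orthogonal_ker {B : H →L[ℂ] H} (hB : IsSelfAdjoint B) {x : H}
    (hx : x ∈ B.kerᗮ) : signOp B x ∈ B.kerᗮ := by
  have hinv : B.ker ∈ invtSubmodule (adjoint (signOp B) : H →ₗ[ℂ] H) := by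
    rw [(isSelfAdjoint_signOp B).adjoint_eq]
    exact Module.End.ker_mem_invtSubmodule_of_commute
      (((commute_signOp hB (Commute.refl B)).symm.map toLinearMapRingHom : Commute _ _))
  exact (mem_invtSubmodule_iff_forall_mem_of_mem _).mp (orthogonal_mem_invtSubmodule hinv) x hx

theorem signOp_conj_apply_of_mul_eq_neg_mul {A B : H →L[ℂ] H} (hB : IsSelfAdjoint B)
    (hAB : A * B = -(B * A)) {x : H} (hx : x ∈ B.kerᗮ) :
    signOp B (A (signOp B x)) = -A x := by
  set U := signOp B
  have hanti : (A * U + U * A) * B = 0 := by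
    calc (A * U + U * A) * B = A * (U * B) + U * (A * B) := by noncomm_ring
      _ = A * CFC.abs B - CFC.abs B * A := by
        rw [hAB, signOp_mul_eq_abs hB, mul_neg, ← mul_assoc, signOp_mul_eq_abs hB, sub_eq_add_neg]
      _ = 0 := by rw [(commute_cfcAbs_of_mul_eq_neg_mul hB hAB).eq, sub_self]
  have hx' : A (U x) = -U (A x) := by
    have := LinearMap.mem_ker.mp (hB.orthogonal_ker_le_ker_of_mul_eq_zero hanti hx)
    simpa [add_eq_zero_iff_eq_neg] using this
  rw [hx', map_neg, ← mul_apply_eq_comp, signOp_mul_self, one_apply_eq_self]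

end Sign

/-- For orthogonal projections `P`, `Q` on a complex Hilbert space `H`, with
`H₁` the orthogonal complement of `(ran P ∩ ker Q) ⊕ (ker P ∩ ran Q)`, there is a self-adjoint
unitary `U` in the double commutant of `{P, Q, 1}` which is the identity on `H₁ᗮ`, maps `H₁`
into `H₁`, and satisfies `U (P - Q) U = Q - P` on `H₁`. -/
theorem statement1 {H : Type*} [NormedAddCommGroup H] [InnerProductSpace ℂ H] [CompleteSpace H]
    (P Q : H →L[ℂ] H) (hP : IsSelfAdjoint P) (hP2 : P * P = P)
    (hQ : IsSelfAdjoint Q) (hQ2 : Q * Q = Q) :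
    ∀ (A B H₁ : Submodule ℂ H),
      A = LinearMap.range (P : H →ₗ[ℂ] H) ⊓ LinearMap.ker (Q : H →ₗ[ℂ] H) →
      B = LinearMap.ker (P : H →ₗ[ℂ] H) ⊓ LinearMap.range (Q : H →ₗ[ℂ] H) →
      H₁ = (A ⊔ B)ᗮ →
      ∃ U : H →L[ℂ] H,
        IsSelfAdjoint U ∧ U * U = 1 ∧
        (∀ W : H →L[ℂ] H,
          (W * P = P * W ∧ W * Q = Q * W ∧ W * 1 = 1 * W) → W * U = U * W) ∧
        (∀ x ∈ H₁ᗮ, U x = x) ∧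
        (∀ x ∈ H₁, U x ∈ H₁) ∧
        (∀ x ∈ H₁, U ((P - Q) (U x)) = (Q - P) x) := by
  rintro A B H₁ rfl rfl rfl
  have hker : (1 - P - Q).ker = (P : H →ₗ[ℂ] H).range ⊓ (Q : H →ₗ[ℂ] H).ker ⊔
      (P : H →ₗ[ℂ] H).ker ⊓ (Q : H →ₗ[ℂ] H).range := by
    simpa using LinearMap.ker_one_sub_sub_of_isIdempotentElem (IsIdempotentElem.toLinearMap hP2)
      (IsIdempotentElem.toLinearMap hQ2)
  set S := 1 - P - Q
  have hS : IsSelfAdjoint S := ((IsSelfAdjoint.one _).sub hP).sub hQ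
  have hanti : (P - Q) * S = -(S * (P - Q)) := by
    simp only [S, mul_sub, sub_mul, one_mul, mul_one, hP2, hQ2]
    abel
  rw [← hker]
  refine ⟨signOp S, isSelfAdjoint_signOp S, signOp_mul_self S, ?_, ?_,
    fun x ↦ signOp_apply_mem_orthogonal_ker hS, fun x hx ↦ ?_⟩
  · rintro W ⟨hWP, hWQ, -⟩
    refine (commute_signOp hS ?_).eq.symm
    simp only [S, commute_iff_eq, mul_sub, sub_mul, one_mul, mul_one, hWP, hWQ]
  · intro x hx
    rw [Submodule.orthogonal_orthogonal] at hx
    exact signOp_apply_of_mem_ker hS hx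
  · rw [signOp_conj_apply_of_mul_eq_neg_mul hS hanti hx, ← neg_apply, neg_sub]
end

section
/- For every real number r ≥ e, the integral ∫_e^r (1/log x) dx is at most 3(r − e)/(2 log r). -/
/-!
With `G x = 3 (x - e) / (2 log x)` we have `G e = 0`, so it suffices that `1 / log x ≤ G' x` on
`[e, r]`. Clearing denominators this says `x (3 - log x) ≤ 3e`, which follows from
`3 - log x ≤ exp (2 - log x) = e² / x` and `e ≤ 3`.
-/

open MeasureTheory Real Set

theorem Real.mul_add_one_sub_log_le_exp (a : ℝ) {x : ℝ} (hx : 0 < x) :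
    x * (a + 1 - log x) ≤ exp a := by
  have h := add_one_le_exp (a - log x)
  rw [exp_sub, exp_log hx, le_div_iff₀ hx] at h
  linarith

theorem Real.mul_three_sub_log_le {x : ℝ} (hx : 0 < x) : x * (3 - log x) ≤ 3 * exp 1 := by
  have h := mul_add_one_sub_log_le_exp 2 hx
  have he : exp 1 ≤ 3 := by linarith [exp_one_lt_d9]
  rw [show (2 : ℝ) = 1 + 1 by norm_num, exp_add] at h
  nlinarith [exp_pos 1]

theorem Real.hasDerivAt_sub_div_log (c : ℝ) {x : ℝ} (hx : 0 < x) (hlog : log x ≠ 0) :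
    HasDerivAt (fun y => (y - c) / log y) ((log x - (x - c) / x) / log x ^ 2) x :=
  (((hasDerivAt_id' x).sub_const c).fun_div (hasDerivAt_log hx.ne') hlog).congr_deriv (by ring)

theorem Real.one_div_log_le_of_exp_one_le {x : ℝ} (hx : exp 1 ≤ x) :
    1 / log x ≤ 3 / 2 * ((log x - (x - exp 1) / x) / log x ^ 2) := by
  have hx0 : 0 < x := (exp_pos 1).trans_le hx
  have hlog : 1 ≤ log x := (le_log_iff_exp_le hx0).2 hx
  have hkey := mul_three_sub_log_le hx0
  have hdiff : 3 / 2 * ((log x - (x - exp 1) / x) / log x ^ 2) - 1 / log x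
      = (x * log x - 3 * x + 3 * exp 1) / (2 * x * log x ^ 2) := by
    field_simp
    ring
  have : 0 ≤ (x * log x - 3 * x + 3 * exp 1) / (2 * x * log x ^ 2) :=
    div_nonneg (by linarith) (by positivity)
  linarith

/-- Lemma A.4: for `r ≥ e`, `∫_e^r dx / log x ≤ 3 (r - e) / (2 log r)`. -/
theorem statement3 (r : ℝ) (hr : Real.exp 1 ≤ r) :
    ∫ x in (Real.exp 1)..r, 1 / Real.log x ≤ 3 * (r - Real.exp 1) / (2 * Real.log r) := by
  have hpos : ∀ x ∈ Icc (exp 1) r, 0 < x ∧ log x ≠ 0 := fun x hx =>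
    have hx0 := (exp_pos 1).trans_le hx.1
    ⟨hx0, (one_pos.trans_le ((le_log_iff_exp_le hx0).2 hx.1)).ne'⟩
  have hderiv : ∀ x ∈ Icc (exp 1) r, HasDerivAt (fun y => 3 / 2 * ((y - exp 1) / log y))
      (3 / 2 * ((log x - (x - exp 1) / x) / log x ^ 2)) x := fun x hx =>
    (hasDerivAt_sub_div_log _ (hpos x hx).1 (hpos x hx).2).const_mul _
  have hint : IntegrableOn (fun x => 1 / log x) (Icc (exp 1) r) :=
    ContinuousOn.integrableOn_Icc fun x hx => ContinuousAt.continuousWithinAt <|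
      continuousAt_const.div (continuousAt_log (hpos x hx).1.ne') (hpos x hx).2
  calc ∫ x in (exp 1)..r, 1 / log x
      ≤ 3 / 2 * ((r - exp 1) / log r) - 3 / 2 * ((exp 1 - exp 1) / log (exp 1)) :=
        intervalIntegral.integral_le_sub_of_hasDeriv_right_of_le hr (HasDerivAt.continuousOn hderiv)
          (fun x hx => (hderiv x (Ioo_subset_Icc_self hx)).hasDerivWithinAt) hint
          fun x hx => one_div_log_le_of_exp_one_le hx.1.le
    _ = 3 * (r - exp 1) / (2 * log r) := by
        rw [sub_self, zero_div, mul_zero, sub_zero]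
        ring
end

section
/- For every real number r > 0, one has r/log(r + e) ≤ ∫₀^r 1/log(x + e) dx ≤ 3r/(2 log(r + e)). -/
/-!
The integrand `1 / log (x + e)` is decreasing, which gives the lower bound. For the upper bound,
`G x = 3 x / (2 log (x + e))` vanishes at `0` and its derivative dominates the integrand on
`[0, ∞)`: this amounts to `3 x ≤ (x + e) log (x + e)`, which follows from the tangent line of
`log` at `e²` together with `e ≤ 3`.
-/

open Real Set

lemma one_le_log_add_exp_one {x : ℝ} (hx : 0 ≤ x) : 1 ≤ log (x + exp 1) := by
  simpa using log_le_log (exp_pos 1) (by linarith : exp 1 ≤ x + exp 1)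

lemma three_mul_sub_exp_one_sq_le_mul_log {t : ℝ} (ht : 0 < t) :
    3 * t - exp 1 ^ 2 ≤ t * log t := by
  have tangent : 1 - (t / exp 1 ^ 2)⁻¹ ≤ log (t / exp 1 ^ 2) :=
    one_sub_inv_le_log_of_pos (by positivity)
  rw [log_div ht.ne' (by positivity), log_pow, log_exp, inv_div] at tangent
  have key : t * (1 - exp 1 ^ 2 / t) ≤ t * (log t - 2) :=
    mul_le_mul_of_nonneg_left (by linarith) ht.le
  rw [mul_sub, mul_div_cancel₀ _ ht.ne'] at key
  linarith

lemma three_mul_le_mul_log_add_exp_one {x : ℝ} (hx : 0 ≤ x) :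
    3 * x ≤ (x + exp 1) * log (x + exp 1) := by
  have e_le_three : exp 1 ≤ 3 := by linarith [exp_one_lt_d9]
  have tangent := three_mul_sub_exp_one_sq_le_mul_log (by positivity : 0 < x + exp 1)
  nlinarith [exp_pos 1]

lemma continuousOn_one_div_log_add_exp_one :
    ContinuousOn (fun x => 1 / log (x + exp 1)) (Ici 0) := by
  intro x (hx : 0 ≤ x)
  have hL := one_le_log_add_exp_one hx
  refine ContinuousAt.continuousWithinAt ?_
  exact continuousAt_const.div ((continuous_add_const (exp 1)).continuousAt.log (by positivity))
    (zero_lt_one.trans_le hL).ne'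

lemma hasDerivAt_three_mul_div_two_mul_log_add_exp_one {x : ℝ} (hx : 0 ≤ x) :
    HasDerivAt (fun y => 3 * y / (2 * log (y + exp 1)))
      ((3 * log (x + exp 1) - 3 * x / (x + exp 1)) / (2 * log (x + exp 1) ^ 2)) x := by
  have hL := one_le_log_add_exp_one hx
  have hlog : HasDerivAt (fun y => log (y + exp 1)) (x + exp 1)⁻¹ x := by
    simpa using ((hasDerivAt_id x).add_const (exp 1)).log (by positivity)
  have hid : HasDerivAt (fun y => 3 * y) 3 x := by simpa using (hasDerivAt_id x).const_mul 3
  refine (hid.div (hlog.const_mul 2) (by positivity)).congr_deriv ?_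
  field_simp

lemma one_div_log_add_exp_one_le {x : ℝ} (hx : 0 ≤ x) :
    1 / log (x + exp 1) ≤
      (3 * log (x + exp 1) - 3 * x / (x + exp 1)) / (2 * log (x + exp 1) ^ 2) := by
  have hL := one_le_log_add_exp_one hx
  have hratio : 3 * x / (x + exp 1) ≤ log (x + exp 1) := by
    rw [div_le_iff₀ (by positivity)]
    linarith [three_mul_le_mul_log_add_exp_one hx]
  rw [div_le_div_iff₀ (by positivity) (by positivity)]
  nlinarith

lemma div_log_add_exp_one_le_integral {r : ℝ} (hr : 0 ≤ r) :
    r / log (r + exp 1) ≤ ∫ x in (0 : ℝ)..r, 1 / log (x + exp 1) := by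
  have antitone_on : ∀ x ∈ Icc 0 r, 1 / log (r + exp 1) ≤ 1 / log (x + exp 1) := fun x hx =>
    one_div_le_one_div_of_le (by linarith [one_le_log_add_exp_one hx.1])
      (log_le_log (by linarith [hx.1, exp_pos 1]) (by linarith [hx.2]))
  calc r / log (r + exp 1) = ∫ _ in (0 : ℝ)..r, 1 / log (r + exp 1) := by
        rw [intervalIntegral.integral_const, smul_eq_mul]; ring
    _ ≤ ∫ x in (0 : ℝ)..r, 1 / log (x + exp 1) :=
      intervalIntegral.integral_mono_on hr intervalIntegrable_const
        ((continuousOn_one_div_log_add_exp_one.mono Icc_subset_Ici_self).intervalIntegrable_of_Icc hr)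
        antitone_on

lemma integral_le_three_mul_div_two_mul_log_add_exp_one {r : ℝ} (hr : 0 ≤ r) :
    ∫ x in (0 : ℝ)..r, 1 / log (x + exp 1) ≤ 3 * r / (2 * log (r + exp 1)) := by
  have hderiv := fun x (hx : 0 ≤ x) => hasDerivAt_three_mul_div_two_mul_log_add_exp_one hx
  simpa using intervalIntegral.integral_le_sub_of_hasDeriv_right_of_le hr
    (fun x hx => (hderiv x hx.1).continuousAt.continuousWithinAt)
    (fun x hx => (hderiv x hx.1.le).hasDerivWithinAt)
    ((continuousOn_one_div_log_add_exp_one.mono Icc_subset_Ici_self).integrableOn_Icc)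
    (fun x hx => one_div_log_add_exp_one_le hx.1.le)

/-- for `r > 0`,
`r / log (r + e) ≤ ∫₀^r dx / log (x + e) ≤ 3 r / (2 log (r + e))`. -/
theorem statement4 (r : ℝ) (hr : 0 < r) :
    r / Real.log (r + Real.exp 1) ≤ (∫ x in (0:ℝ)..r, 1 / Real.log (x + Real.exp 1)) ∧
    (∫ x in (0:ℝ)..r, 1 / Real.log (x + Real.exp 1)) ≤
      3 * r / (2 * Real.log (r + Real.exp 1)) :=
  ⟨div_log_add_exp_one_le_integral hr.le,
    integral_le_three_mul_div_two_mul_log_add_exp_one hr.le⟩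
end

section
/- Let μ : (0,∞) → ℝ be a nonnegative, antitone and bounded function, and adopt the convention exp(−t/μ(x)) = 0 whenever μ(x) = 0. Then the following are equivalent: (i) there exist constants C > 0 and x₀ > 1 such that μ(x) ≤ C/log x for all x ≥ x₀ (i.e., μ(x) = O(1/log x) as x → ∞); (ii) there exists t₀ > 0 such that for every t > t₀ the integral ∫₀^∞ exp(−t/μ(x)) dx is finite. -/
/-!
If `μ x ≤ C / log x` for large `x`, then `exp (-t / μ x) ≤ x ^ (-t / C)` there, which is
integrable at infinity as soon as `t > C`; near `0` the integrand is at most `1`.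
Conversely, the integrand is antitone, so `x · exp (-t / μ x)` is bounded by the integral
`K` over `(0, x]`; taking logarithms, `t / μ x ≥ log x - log K ≥ (log x) / 2` for large `x`.
-/

open MeasureTheory Set Real
open scoped ENNReal

/-- The convention `exp (-t / 0) = 0` is the limit as `m → 0⁺` for `t > 0`. -/
noncomputable def expNegDiv (t m : ℝ) : ℝ := if m = 0 then 0 else exp (-t / m)

section expNegDiv

variable {t m n C K x : ℝ}

lemma expNegDiv_nonneg (t m : ℝ) : 0 ≤ expNegDiv t m := by
  unfold expNegDiv
  split_ifs
  exacts [le_rfl, (exp_pos _).le]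

lemma expNegDiv_le_one (ht : 0 ≤ t) (hm : 0 ≤ m) : expNegDiv t m ≤ 1 := by
  unfold expNegDiv
  split_ifs
  · exact zero_le_one
  · exact exp_le_one_iff.2 (div_nonpos_of_nonpos_of_nonneg (neg_nonpos.2 ht) hm)

lemma expNegDiv_le_expNegDiv (ht : 0 ≤ t) (hm : 0 ≤ m) (hmn : m ≤ n) :
    expNegDiv t m ≤ expNegDiv t n := by
  rcases hm.eq_or_lt with rfl | hm
  · simpa [expNegDiv] using expNegDiv_nonneg t n
  have hn : 0 < n := hm.trans_le hmn
  simp only [expNegDiv, hm.ne', hn.ne', if_false, exp_le_exp, neg_div, neg_le_neg_iff]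
  exact div_le_div_of_nonneg_left ht hm hmn

lemma AntitoneOn.expNegDiv_comp {μ : ℝ → ℝ} {s : Set ℝ} (ht : 0 ≤ t) (hμ : AntitoneOn μ s)
    (hμ0 : ∀ x ∈ s, 0 ≤ μ x) : AntitoneOn (fun x ↦ expNegDiv t (μ x)) s :=
  fun _ hx _ hy hxy ↦ expNegDiv_le_expNegDiv ht (hμ0 _ hy) (hμ hx hy hxy)

lemma expNegDiv_le_rpow (ht : 0 ≤ t) (hC : 0 < C) (hx : 1 < x) (hm : 0 ≤ m)
    (hmC : m ≤ C / log x) : expNegDiv t m ≤ x ^ (-(t / C)) := by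
  rcases hm.eq_or_lt with rfl | hm
  · simpa [expNegDiv] using (rpow_pos_of_pos (zero_lt_one.trans hx) _).le
  have hlog : 0 < log x := log_pos hx
  have key : t * log x / C ≤ t / m := calc
    t * log x / C = t / (C / log x) := by field_simp
    _ ≤ t / m := div_le_div_of_nonneg_left ht hm hmC
  rw [expNegDiv, if_neg hm.ne', rpow_def_of_pos (zero_lt_one.trans hx), exp_le_exp]
  linarith [show log x * -(t / C) = -(t * log x / C) by ring, neg_div m t]

lemma le_two_mul_div_log_of_expNegDiv_le (ht : 0 ≤ t) (hm : 0 ≤ m) (hK : 0 < K)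
    (hx : K ^ 2 ≤ x) (hx1 : 1 < x) (h : expNegDiv t m ≤ K / x) : m ≤ 2 * t / log x := by
  have hlog : 0 < log x := log_pos hx1
  rcases hm.eq_or_lt with rfl | hm
  · positivity
  have hlogK : 2 * log K ≤ log x := by
    simpa [log_pow] using log_le_log (by positivity) hx
  rw [expNegDiv, if_neg hm.ne', ← le_log_iff_exp_le (by positivity),
    log_div hK.ne' (by linarith), neg_div, neg_le] at h
  rw [le_div_iff₀ hlog]
  have : log x / 2 ≤ t / m := by linarith
  rw [div_le_div_iff₀ two_pos hm] at this
  linarith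

end expNegDiv

section Lebesgue

variable {f g : ℝ → ℝ} {a b x : ℝ}

lemma ofReal_mul_le_setLIntegral_Ioc (hf : ∀ y ∈ Ioc a b, f b ≤ f y) :
    ENNReal.ofReal (f b) * ENNReal.ofReal (b - a) ≤ ∫⁻ y in Ioc a b, ENNReal.ofReal (f y) := by
  rw [← Real.volume_Ioc, ← setLIntegral_const]
  exact setLIntegral_mono' measurableSet_Ioc fun y hy ↦ ENNReal.ofReal_le_ofReal (hf y hy)

lemma mul_le_toReal_setLIntegral_Ioi (hf : AntitoneOn f (Ioi 0))
    (hfin : ∫⁻ y in Ioi 0, ENNReal.ofReal (f y) < ∞) (hx : 0 < x) :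
    f x * x ≤ (∫⁻ y in Ioi 0, ENNReal.ofReal (f y)).toReal := by
  refine (ENNReal.ofReal_le_iff_le_toReal hfin.ne).1 ?_
  calc ENNReal.ofReal (f x * x) = ENNReal.ofReal (f x) * ENNReal.ofReal (x - 0) := by
        rw [sub_zero, ENNReal.ofReal_mul' hx.le]
    _ ≤ ∫⁻ y in Ioc 0 x, ENNReal.ofReal (f y) :=
        ofReal_mul_le_setLIntegral_Ioc fun y hy ↦ hf hy.1 hx hy.2
    _ ≤ ∫⁻ y in Ioi 0, ENNReal.ofReal (f y) := lintegral_mono_set Ioc_subset_Ioi_self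

lemma setLIntegral_Ioi_lt_top_of_le_one_of_le_rpow {x₀ s : ℝ} (hx₀ : 0 < x₀) (hs : 1 < s)
    (h_one : ∀ x ∈ Ioc 0 x₀, g x ≤ 1) (h_rpow : ∀ x ∈ Ioi x₀, g x ≤ x ^ (-s)) :
    ∫⁻ x in Ioi 0, ENNReal.ofReal (g x) < ∞ := by
  rw [← Ioc_union_Ioi_eq_Ioi hx₀.le, lintegral_union measurableSet_Ioi Ioc_disjoint_Ioi_same]
  refine ENNReal.add_lt_top.2 ⟨?_, ?_⟩
  · refine setLIntegral_lt_top_of_le_nnreal (by simp [Real.volume_Ioc]) ⟨1, fun x hx ↦ ?_⟩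
    simpa using ENNReal.ofReal_le_ofReal (h_one x hx)
  · refine lt_of_le_of_lt (setLIntegral_mono' measurableSet_Ioi fun x hx ↦
      ENNReal.ofReal_le_ofReal (h_rpow x hx)) ?_
    exact (integrableOn_Ioi_rpow_of_lt (by linarith) hx₀).setLIntegral_lt_top

end Lebesgue

theorem statement7_general (μ : ℝ → ℝ)
    (h_nonneg : ∀ x ∈ Set.Ioi (0:ℝ), 0 ≤ μ x)
    (h_anti : AntitoneOn μ (Set.Ioi 0)) :
    (∃ C > (0:ℝ), ∃ x₀ > (1:ℝ), ∀ x ≥ x₀, μ x ≤ C / Real.log x) ↔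
    (∃ t₀ > (0:ℝ), ∀ t > t₀,
      (∫⁻ x in Set.Ioi (0:ℝ),
        ENNReal.ofReal (if μ x = 0 then 0 else Real.exp (-t / μ x))) < ⊤) := by
  change _ ↔ ∃ t₀ > (0:ℝ), ∀ t > t₀, ∫⁻ x in Ioi 0, ENNReal.ofReal (expNegDiv t (μ x)) < ⊤
  constructor
  · rintro ⟨C, hC, x₀, hx₀, hμC⟩
    refine ⟨C, hC, fun t ht ↦ ?_⟩
    have ht0 : 0 ≤ t := hC.le.trans ht.le
    refine setLIntegral_Ioi_lt_top_of_le_one_of_le_rpow (zero_lt_one.trans hx₀)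
      ((one_lt_div hC).2 ht) (fun x hx ↦ expNegDiv_le_one ht0 (h_nonneg x hx.1)) fun x hx ↦ ?_
    have hx1 : 1 < x := hx₀.trans hx
    exact expNegDiv_le_rpow ht0 hC hx1 (h_nonneg x (zero_lt_one.trans hx1)) (hμC x hx.le)
  · rintro ⟨t₀, ht₀, hfin⟩
    set t := t₀ + 1
    have ht : 0 ≤ t := by positivity
    have h_int := hfin t (lt_add_one t₀)
    set K := (∫⁻ x in Ioi 0, ENNReal.ofReal (expNegDiv t (μ x))).toReal + 1
    have hK : 0 < K := by positivity
    have h_decay : ∀ x ∈ Ioi (0:ℝ), expNegDiv t (μ x) ≤ K / x := fun x hx ↦ by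
      rw [le_div_iff₀ hx]
      exact (mul_le_toReal_setLIntegral_Ioi (h_anti.expNegDiv_comp ht h_nonneg) h_int hx).trans
        (by simp [K])
    refine ⟨2 * t, by positivity, K ^ 2 + 1, lt_add_of_pos_left 1 (pow_pos hK 2), fun x hx ↦ ?_⟩
    have hx1 : 1 < x := by nlinarith
    have hx0 : x ∈ Ioi 0 := zero_lt_one.trans hx1
    exact le_two_mul_div_log_of_expNegDiv_le ht (h_nonneg x hx0) hK (by linarith) hx1
      (h_decay x hx0)

/-- scalar Lemma B.4: for a nonnegative, antitone and bounded
`μ : (0,∞) → ℝ` (with the convention `exp (-t/μ x) = 0` when `μ x = 0`),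
`μ x = O(1/log x)` as `x → ∞` iff there is `t₀ > 0` such that for every `t > t₀`
the integral `∫₀^∞ exp (-t / μ x) dx` is finite. -/
theorem statement7 (μ : ℝ → ℝ)
    (h_nonneg : ∀ x ∈ Set.Ioi (0:ℝ), 0 ≤ μ x)
    (h_anti : AntitoneOn μ (Set.Ioi 0))
    (h_bdd : ∃ M : ℝ, ∀ x ∈ Set.Ioi (0:ℝ), μ x ≤ M) :
    (∃ C > (0:ℝ), ∃ x₀ > (1:ℝ), ∀ x ≥ x₀, μ x ≤ C / Real.log x) ↔
    (∃ t₀ > (0:ℝ), ∀ t > t₀,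
      (∫⁻ x in Set.Ioi (0:ℝ),
        ENNReal.ofReal (if μ x = 0 then 0 else Real.exp (-t / μ x))) < ⊤) :=
  statement7_general μ h_nonneg h_anti
end
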